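/- Let U ⊆ ℝ_t × ℝ²_x be open, let h and v¹, v² be C² on U with h > 0, and suppose they solve the 2D rotating shallow water system B h = −h div v, B v¹ = v² − ∂₁h, B v² = −v¹ − ∂₂h on U. Then ρ = ln h satisfies the identity B²ρ = −ε_{ij}∂_i v^j + ∂_i v^j ∂_j v^i + e^{ρ} Δρ + e^{ρ} (∂₁ρ)² + e^{ρ} (∂₂ρ)² on U, where Δ = ∂₁² + ∂₂² and the indices i, j are summed over {1,2}. -/

import Mathlib

/-!
Since `ρ = ln h`, the mass equation says `Bρ = -div v`, so `B²ρ = -B(∂ᵢvⁱ)`. Commuting `B` past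
`∂ᵢ` costs `[∂ᵢ, B] f = ∂ᵢvʲ ∂ⱼf`, whence `B(∂ᵢvⁱ) = ∂ᵢ(Bvⁱ) - ∂ᵢvʲ ∂ⱼvⁱ`, and the momentum
equations give `∂ᵢ(Bvⁱ) = ε_{ij}∂ᵢvʲ - Δh`. Finally `∂ᵢh = h ∂ᵢρ` turns `Δh` into
`h (Δρ + |∇ρ|²)` with `h = e^ρ`.
-/

/-- Partial derivative in the `i`-th coordinate direction of spacetime
`ℝ_t × ℝ²_x ≃ (Fin 3 → ℝ)`, coordinates `(x⁰, x¹, x²) = (t, x₁, x₂)`. -/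
noncomputable def pd (i : Fin 3) (f : (Fin 3 → ℝ) → ℝ) (x : Fin 3 → ℝ) : ℝ :=
  fderiv ℝ f x (Pi.single i 1)

/-- Material derivative `B = ∂ₜ + v¹∂₁ + v²∂₂`. -/
noncomputable def matD (v1 v2 f : (Fin 3 → ℝ) → ℝ) (x : Fin 3 → ℝ) : ℝ :=
  pd 0 f x + v1 x * pd 1 f x + v2 x * pd 2 f x

open Filter Topology

section PartialDerivatives

variable {f g : (Fin 3 → ℝ) → ℝ} {x : Fin 3 → ℝ} {i j : Fin 3}

theorem Filter.EventuallyEq.pd_eq (hfg : f =ᶠ[𝓝 x] g) : pd i f x = pd i g x := by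
  rw [pd, pd, hfg.fderiv_eq]

theorem pd_add (hf : DifferentiableAt ℝ f x) (hg : DifferentiableAt ℝ g x) :
    pd i (fun y => f y + g y) x = pd i f x + pd i g x := by
  simp [pd, fderiv_fun_add hf hg]

theorem pd_sub (hf : DifferentiableAt ℝ f x) (hg : DifferentiableAt ℝ g x) :
    pd i (fun y => f y - g y) x = pd i f x - pd i g x := by
  simp [pd, fderiv_fun_sub hf hg]

theorem pd_neg : pd i (fun y => -f y) x = -pd i f x := by
  simp [pd, fderiv_fun_neg]

theorem pd_mul (hf : DifferentiableAt ℝ f x) (hg : DifferentiableAt ℝ g x) :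
    pd i (fun y => f y * g y) x = f x * pd i g x + pd i f x * g x := by
  simp [pd, fderiv_fun_mul hf hg, mul_comm]

theorem pd_log (hf : DifferentiableAt ℝ f x) (hfx : f x ≠ 0) :
    pd i (fun y => Real.log (f y)) x = pd i f x / f x := by
  simp [pd, (hf.hasFDerivAt.log hfx).fderiv, div_eq_inv_mul]

theorem differentiableAt_pd (hf : ContDiffAt ℝ 2 f x) : DifferentiableAt ℝ (pd j f) x :=
  ((hf.fderiv_right (m := 1) le_rfl).differentiableAt one_ne_zero).clm_apply
    (differentiableAt_const _)

theorem pd_pd (hf : ContDiffAt ℝ 2 f x) :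
    pd i (pd j f) x = fderiv ℝ (fderiv ℝ f) x (Pi.single i 1) (Pi.single j 1) := by
  have hf' := (hf.fderiv_right (m := 1) le_rfl).differentiableAt one_ne_zero
  change fderiv ℝ (fun y => fderiv ℝ f y (Pi.single j 1)) x (Pi.single i 1) = _
  simp [fderiv_clm_apply hf' (differentiableAt_const _)]

theorem pd_comm (hf : ContDiffAt ℝ 2 f x) : pd i (pd j f) x = pd j (pd i f) x := by
  rw [pd_pd hf, pd_pd hf]
  exact hf.isSymmSndFDerivAt (by simp [minSmoothness_of_isRCLikeNormedField]) _ _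

theorem pd_pd_eq_mul_pd_pd_log (hf : ContDiffAt ℝ 2 f x) (hfx : f x ≠ 0) :
    pd i (pd j f) x = f x * (pd i (pd j fun y => Real.log (f y)) x
      + pd i (fun y => Real.log (f y)) x * pd j (fun y => Real.log (f y)) x) := by
  have hpd_log : ∀ᶠ y in 𝓝 x, ∀ k, pd k f y = f y * pd k (fun y => Real.log (f y)) y := by
    filter_upwards [hf.eventually (by simp), hf.continuousAt.eventually_ne hfx] with y hy hfy k
    rw [pd_log (hy.differentiableAt two_ne_zero) hfy, mul_div_cancel₀ _ hfy]
  have hlog : ContDiffAt ℝ 2 (fun y => Real.log (f y)) x := hf.log hfx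
  have hpd_j : pd j f =ᶠ[𝓝 x] fun y => f y * pd j (fun y => Real.log (f y)) y :=
    hpd_log.mono fun y hy => hy j
  rw [hpd_j.pd_eq,
    pd_mul (hf.differentiableAt two_ne_zero) (differentiableAt_pd hlog), hpd_log.self_of_nhds i]
  ring

end PartialDerivatives

section MaterialDerivative

variable {v1 v2 f g : (Fin 3 → ℝ) → ℝ} {x : Fin 3 → ℝ}

theorem Filter.EventuallyEq.matD_eq (hfg : f =ᶠ[𝓝 x] g) : matD v1 v2 f x = matD v1 v2 g x := by
  rw [matD, matD, hfg.pd_eq, hfg.pd_eq, hfg.pd_eq]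

theorem matD_add (hf : DifferentiableAt ℝ f x) (hg : DifferentiableAt ℝ g x) :
    matD v1 v2 (fun y => f y + g y) x = matD v1 v2 f x + matD v1 v2 g x := by
  simp only [matD, pd_add hf hg]
  ring

theorem matD_neg : matD v1 v2 (fun y => -f y) x = -matD v1 v2 f x := by
  simp only [matD, pd_neg]
  ring

theorem matD_log (hf : DifferentiableAt ℝ f x) (hfx : f x ≠ 0) :
    matD v1 v2 (fun y => Real.log (f y)) x = matD v1 v2 f x / f x := by
  simp only [matD, pd_log hf hfx]
  ring

theorem pd_matD (i : Fin 3) (hv1 : DifferentiableAt ℝ v1 x) (hv2 : DifferentiableAt ℝ v2 x)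
    (hf : ContDiffAt ℝ 2 f x) :
    pd i (matD v1 v2 f) x
      = matD v1 v2 (pd i f) x + pd i v1 x * pd 1 f x + pd i v2 x * pd 2 f x := by
  have hpd : ∀ j, DifferentiableAt ℝ (pd j f) x := fun j => differentiableAt_pd hf
  change pd i (fun y => pd 0 f y + v1 y * pd 1 f y + v2 y * pd 2 f y) x = _
  rw [pd_add ((hpd 0).fun_add (hv1.fun_mul (hpd 1))) (hv2.fun_mul (hpd 2)),
    pd_add (hpd 0) (hv1.fun_mul (hpd 1)),
    pd_mul hv1 (hpd 1), pd_mul hv2 (hpd 2), matD, pd_comm (i := i) (j := 0) hf,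
    pd_comm (i := i) (j := 1) hf, pd_comm (i := i) (j := 2) hf]
  ring

end MaterialDerivative

/-- For `C²` solutions (with `h > 0`) of the 2D rotating shallow water system on an open
set `U`, the logarithmic height `ρ = ln h` satisfies
`B²ρ = −ε_{ij}∂_i v^j + ∂_i v^j ∂_j v^i + e^ρ Δρ + e^ρ (∂₁ρ)² + e^ρ (∂₂ρ)²` on `U`,
where `ε_{ij}` is the antisymmetric symbol (`ε₁₂ = 1`), repeated indices are summed over
`{1,2}`, and `Δ = ∂₁² + ∂₂²`. -/
theorem second_material_derivative_of_log_height
    (U : Set (Fin 3 → ℝ)) (hU : IsOpen U)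
    (h v1 v2 : (Fin 3 → ℝ) → ℝ)
    (hh : ContDiffOn ℝ 2 h U)
    (hv1 : ContDiffOn ℝ 2 v1 U) (hv2 : ContDiffOn ℝ 2 v2 U)
    (hpos : ∀ x ∈ U, 0 < h x)
    (hmass : ∀ x ∈ U, matD v1 v2 h x = -(h x) * (pd 1 v1 x + pd 2 v2 x))
    (hmom1 : ∀ x ∈ U, matD v1 v2 v1 x = v2 x - pd 1 h x)
    (hmom2 : ∀ x ∈ U, matD v1 v2 v2 x = -v1 x - pd 2 h x) :
    ∀ x ∈ U,
      matD v1 v2 (matD v1 v2 (fun y => Real.log (h y))) x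
        = -(pd 1 v2 x - pd 2 v1 x)
          + (pd 1 v1 x * pd 1 v1 x + pd 1 v2 x * pd 2 v1 x
              + pd 2 v1 x * pd 1 v2 x + pd 2 v2 x * pd 2 v2 x)
          + Real.exp (Real.log (h x))
              * (pd 1 (pd 1 (fun y => Real.log (h y))) x
                  + pd 2 (pd 2 (fun y => Real.log (h y))) x)
          + Real.exp (Real.log (h x)) * (pd 1 (fun y => Real.log (h y)) x) ^ 2
          + Real.exp (Real.log (h x)) * (pd 2 (fun y => Real.log (h y)) x) ^ 2 := by
  intro x hx
  have hC2 : ∀ {f : (Fin 3 → ℝ) → ℝ}, ContDiffOn ℝ 2 f U → ∀ y ∈ U, ContDiffAt ℝ 2 f y :=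
    fun hf y hy => hf.contDiffAt (hU.mem_nhds hy)
  have hD : ∀ {f : (Fin 3 → ℝ) → ℝ}, ContDiffOn ℝ 2 f U → DifferentiableAt ℝ f x :=
    fun hf => (hC2 hf x hx).differentiableAt two_ne_zero
  have near : ∀ {f g : (Fin 3 → ℝ) → ℝ}, (∀ y ∈ U, f y = g y) → f =ᶠ[𝓝 x] g :=
    fun hfg => eventuallyEq_of_mem (hU.mem_nhds hx) hfg
  have hBρ : matD v1 v2 (fun y => Real.log (h y)) =ᶠ[𝓝 x] fun y => -(pd 1 v1 y + pd 2 v2 y) :=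
    near fun y hy => by
      rw [matD_log ((hC2 hh y hy).differentiableAt two_ne_zero) (hpos y hy).ne', hmass y hy,
        neg_mul, neg_div, mul_div_cancel_left₀ _ (hpos y hy).ne']
  have hB2ρ := hBρ.matD_eq (v1 := v1) (v2 := v2)
  rw [matD_neg, matD_add (differentiableAt_pd (hC2 hv1 x hx))
    (differentiableAt_pd (hC2 hv2 x hx))] at hB2ρ
  have hBdiv1 := pd_matD 1 (hD hv1) (hD hv2) (hC2 hv1 x hx)
  rw [(near hmom1).pd_eq, pd_sub (hD hv2) (differentiableAt_pd (hC2 hh x hx))] at hBdiv1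
  have hBdiv2 := pd_matD 2 (hD hv1) (hD hv2) (hC2 hv2 x hx)
  rw [(near hmom2).pd_eq, pd_sub (hD hv1).fun_neg (differentiableAt_pd (hC2 hh x hx)), pd_neg]
    at hBdiv2
  have hΔh₁ := pd_pd_eq_mul_pd_pd_log (i := 1) (j := 1) (hC2 hh x hx) (hpos x hx).ne'
  have hΔh₂ := pd_pd_eq_mul_pd_pd_log (i := 2) (j := 2) (hC2 hh x hx) (hpos x hx).ne'
  rw [hB2ρ, Real.exp_log (hpos x hx)]
  linear_combination hBdiv1 + hBdiv2 + hΔh₁ + hΔh₂
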